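/- arXiv:2109.05717 — 6 statements merged into one kernel-verified Lean document; each statement's English description precedes it below -/
import Mathlib

section
/- Let H be a finite-dimensional complex vector space equipped with a conjugation σ (an ℝ-linear involution of H satisfying σ(c·v) = conj(c)·σ(v) for all c ∈ ℂ, v ∈ H). Suppose H = ⊕_{(p,q) ∈ ℤ×ℤ} I^{p,q} is an internal direct sum decomposition by complex subspaces such that, for a fixed integer w, I^{p,q} = 0 unless p+q = w−1 or p+q = w, and such that σ(I^{p,q}) ⊆ I^{q,p} + Σ_{k<p, l<q} I^{k,l} for all p, q. Then σ(I^{p,q}) = I^{q,p} for all p, q. (This is the paper's Proposition 2.3: a mixed Hodge structure whose weights are concentrated on two consecutive levels w−1 and w is ℝ-split.) -/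
/-! If `p + q ≤ w`, every `I^{k,l}` with `k < p`, `l < q` has `k + l ≤ w - 2`, hence vanishes,
so the congruence `σ(I^{p,q}) ⊆ I^{q,p} + Σ_{k<p, l<q} I^{k,l}` has no error term; if `p + q > w`,
then `I^{p,q} = 0` itself. Thus `σ` maps `I^{p,q}` into `I^{q,p}` for all `p, q`, and since `σ` is an
involution the reverse inclusion follows by applying this to `I^{q,p}`. -/

theorem Submodule.map_eq_of_involutive {R M : Type*} [Semiring R] [AddCommMonoid M] [Module R M]
    {σ : M →ₗ[R] M} (hσ : Function.Involutive σ) {A B : Submodule R M}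
    (hAB : A.map σ ≤ B) (hBA : B.map σ ≤ A) : A.map σ = B :=
  le_antisymm hAB fun u hu => ⟨σ u, hBA ⟨u, hu, rfl⟩, hσ u⟩

section TwoWeights

variable {R M : Type*} [Semiring R] [AddCommMonoid M] [Module R M] {I : ℤ × ℤ → Submodule R M}
  {w : ℤ}

theorem iSup_lt_lt_eq_bot_of_two_weights
    (hw : ∀ p q : ℤ, p + q ≠ w - 1 → p + q ≠ w → I (p, q) = ⊥) {p q : ℤ} (hpq : p + q ≤ w) :
    (⨆ (k : ℤ) (_ : k < p), ⨆ (l : ℤ) (_ : l < q), I (k, l)) = ⊥ := by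
  simp only [iSup_eq_bot]
  intro k hk l hl
  exact hw k l (by omega) (by omega)

theorem mem_of_mem_sup_iSup_lt_lt_of_two_weights
    (hw : ∀ p q : ℤ, p + q ≠ w - 1 → p + q ≠ w → I (p, q) = ⊥) {f : M → M} (hf : f 0 = 0)
    {p q : ℤ} {v : M} (hv : v ∈ I (p, q))
    (hfv : f v ∈ I (q, p) ⊔ ⨆ (k : ℤ) (_ : k < p), ⨆ (l : ℤ) (_ : l < q), I (k, l)) :
    f v ∈ I (q, p) := by
  rcases le_or_gt (p + q) w with hpq | hpq
  · rwa [iSup_lt_lt_eq_bot_of_two_weights hw hpq, sup_bot_eq] at hfv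
  · rw [hw p q (by omega) (by omega), Submodule.mem_bot] at hv
    rw [hv, hf]
    exact zero_mem _

end TwoWeights

theorem rSplit_of_two_consecutive_weights_general
    {H : Type*} [AddCommGroup H] [Module ℂ H] [Module ℝ H]
    [IsScalarTower ℝ ℂ H]
    (σ : H →ₗ[ℝ] H)
    (hσinv : ∀ v, σ (σ v) = v)
    (w : ℤ) (I : ℤ × ℤ → Submodule ℂ H)
    (hw : ∀ p q : ℤ, p + q ≠ w - 1 → p + q ≠ w → I (p, q) = ⊥)
    (hconj : ∀ p q : ℤ, ∀ v ∈ I (p, q),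
      σ v ∈ I (q, p) ⊔ ⨆ (k : ℤ) (_ : k < p), ⨆ (l : ℤ) (_ : l < q), I (k, l)) :
    ∀ p q : ℤ, Submodule.map σ ((I (p, q)).restrictScalars ℝ)
      = (I (q, p)).restrictScalars ℝ := by
  have hmaps : ∀ p q : ℤ,
      Submodule.map σ ((I (p, q)).restrictScalars ℝ) ≤ (I (q, p)).restrictScalars ℝ := by
    rintro p q _ ⟨v, hv, rfl⟩
    exact mem_of_mem_sup_iSup_lt_lt_of_two_weights hw (map_zero σ) hv (hconj p q v hv)
  exact fun p q => Submodule.map_eq_of_involutive hσinv (hmaps p q) (hmaps q p)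

/-- **Paper's Proposition 2.3.** A mixed Hodge structure whose weights are concentrated
on two consecutive levels `w-1` and `w` is ℝ-split: if `σ` is a conjugation on `H`,
`H = ⊕ I^{p,q}` with `I^{p,q} = 0` unless `p+q ∈ {w-1, w}`, and
`σ(I^{p,q}) ⊆ I^{q,p} + Σ_{k<p,l<q} I^{k,l}`, then `σ(I^{p,q}) = I^{q,p}`. -/
theorem rSplit_of_two_consecutive_weights
    {H : Type*} [AddCommGroup H] [Module ℂ H] [Module ℝ H]
    [IsScalarTower ℝ ℂ H] [FiniteDimensional ℂ H]
    (σ : H →ₗ[ℝ] H)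
    (hσinv : ∀ v, σ (σ v) = v)
    (hσconj : ∀ (c : ℂ) (v : H), σ (c • v) = (starRingEnd ℂ) c • σ v)
    (w : ℤ) (I : ℤ × ℤ → Submodule ℂ H)
    (hI : DirectSum.IsInternal I)
    (hw : ∀ p q : ℤ, p + q ≠ w - 1 → p + q ≠ w → I (p, q) = ⊥)
    (hconj : ∀ p q : ℤ, ∀ v ∈ I (p, q),
      σ v ∈ I (q, p) ⊔ ⨆ (k : ℤ) (_ : k < p), ⨆ (l : ℤ) (_ : l < q), I (k, l)) :
    ∀ p q : ℤ, Submodule.map σ ((I (p, q)).restrictScalars ℝ)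
      = (I (q, p)).restrictScalars ℝ :=
  rSplit_of_two_consecutive_weights_general σ hσinv w I hw hconj
end

section
/- Let A and B be finite-dimensional complex vector spaces with conjugations σ_A and σ_B. Fix an integer n. Suppose A = ⊕_{(p,q)} K^{p,q} is an internal direct sum decomposition with K^{p,q} = 0 whenever p+q > n and σ_A(K^{p,q}) = K^{q,p} for all p,q, and B = ⊕_{(p,q)} J^{p,q} is an internal direct sum decomposition with J^{p,q} = 0 whenever p+q ≤ n and σ_B(J^{p,q}) = J^{q,p} for all p,q. Define F^p A = ⊕_{k ≥ p, l} K^{k,l} and F^p B = ⊕_{k ≥ p, l} J^{k,l}. If T : B → A is a ℂ-linear map satisfying T ∘ σ_B = σ_A ∘ T and T(F^p B) ⊆ F^p A for every p ∈ ℤ, then T = 0. (This is the uniqueness part of the paper's Proposition 2.4: Deligne's ℝ-linear section of an extension of ℝ-split mixed Hodge structures is unique.) -/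
/-!
If `b ∈ J^{p,q}` with `p + q > n`, write `b = σ_B b'` with `b' ∈ J^{q,p}`. Filtration
compatibility puts `T b` in `F^p A`, and also `T b = σ_A (T b')` with `T b' ∈ F^q A`, so `T b`
lies in the conjugate filtration `\bar F^q A = ⊕_{l ≥ q} K^{k,l}`. The pieces `K^{k,l}` shared
by `F^p A` and `\bar F^q A` have `k + l ≥ p + q > n`, hence vanish, so `F^p A ∩ \bar F^q A = 0`
and `T b = 0`. Since the `J^{p,q}` span `B`, `T = 0`.
-/

lemma iSupIndep.disjoint_biSup_biSup_of_forall_mem_inter {α ι : Type*} [CompleteLattice α]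
    [IsModularLattice α] [IsCompactlyGenerated α] {f : ι → α} (hf : iSupIndep f)
    {s t : Set ι} (hst : ∀ i ∈ s ∩ t, f i = ⊥) :
    Disjoint (⨆ i ∈ s, f i) (⨆ i ∈ t, f i) := by
  have ht : ⨆ i ∈ t, f i = ⨆ i ∈ t \ s, f i := by
    refine le_antisymm (iSup₂_le fun i hit => ?_) (biSup_mono fun i hi => hi.1)
    by_cases his : i ∈ s
    · exact (hst i ⟨his, hit⟩).trans_le bot_le
    · exact le_biSup f ⟨hit, his⟩
  rw [ht]
  exact hf.disjoint_biSup_biSup Set.disjoint_sdiff_right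

namespace Submodule

variable {R S M N ι κ : Type*} [Semiring R] [Semiring S] [AddCommMonoid M] [AddCommMonoid N]
  [Module R M] [Module S M] [Module R N] [Module S N] [SMul R S]
  [IsScalarTower R S M] [IsScalarTower R S N]

lemma map_restrictScalars_biSup (σ : M →ₗ[R] N) {I : ι → Submodule S M}
    {L : κ → Submodule S N} {e : ι → κ}
    (h : ∀ i, map σ ((I i).restrictScalars R) = (L (e i)).restrictScalars R) (s : Set ι) :
    map σ ((⨆ i ∈ s, I i).restrictScalars R) = (⨆ j ∈ e '' s, L j).restrictScalars R := by
  simp only [restrictScalars_iSup, map_iSup, h, iSup_image]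

end Submodule

section HodgeFiltration

variable {R M : Type*} [Semiring R] [AddCommMonoid M] [Module R M]

def hodgeFiltration (I : ℤ × ℤ → Submodule R M) (p : ℤ) : Submodule R M :=
  ⨆ i ∈ Set.Ici p ×ˢ Set.univ, I i

def conjHodgeFiltration (I : ℤ × ℤ → Submodule R M) (q : ℤ) : Submodule R M :=
  ⨆ i ∈ Set.univ ×ˢ Set.Ici q, I i

lemma hodgeFiltration_eq_iSup (I : ℤ × ℤ → Submodule R M) (p : ℤ) :
    hodgeFiltration I p = ⨆ (k : ℤ) (_ : p ≤ k), ⨆ (l : ℤ), I (k, l) := by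
  simp only [hodgeFiltration, biSup_prod, Set.mem_univ, iSup_pos]
  rfl

lemma mem_hodgeFiltration_of_mem {I : ℤ × ℤ → Submodule R M} {p q : ℤ} {x : M}
    (hx : x ∈ I (p, q)) : x ∈ hodgeFiltration I p :=
  Submodule.mem_iSup_of_mem (p, q) (Submodule.mem_iSup_of_mem ⟨le_refl p, Set.mem_univ q⟩ hx)

lemma map_hodgeFiltration {R₀ : Type*} [Semiring R₀] [Module R₀ M] [SMul R₀ R]
    [IsScalarTower R₀ R M] (σ : M →ₗ[R₀] M) {I : ℤ × ℤ → Submodule R M}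
    (hσ : ∀ p q, Submodule.map σ ((I (p, q)).restrictScalars R₀) = (I (q, p)).restrictScalars R₀)
    (p : ℤ) :
    Submodule.map σ ((hodgeFiltration I p).restrictScalars R₀)
      = (conjHodgeFiltration I p).restrictScalars R₀ := by
  rw [hodgeFiltration, Submodule.map_restrictScalars_biSup σ (e := Prod.swap)
    (fun i => hσ i.1 i.2), Set.image_swap_prod]
  rfl

end HodgeFiltration

lemma disjoint_hodgeFiltration_conjHodgeFiltration {R M : Type*} [Ring R] [AddCommGroup M]
    [Module R M] {I : ℤ × ℤ → Submodule R M} (hI : iSupIndep I) {n : ℤ}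
    (hIn : ∀ k l : ℤ, n < k + l → I (k, l) = ⊥) {p q : ℤ} (hpq : n < p + q) :
    Disjoint (hodgeFiltration I p) (conjHodgeFiltration I q) :=
  hI.disjoint_biSup_biSup_of_forall_mem_inter fun i ⟨⟨hp, _⟩, ⟨_, hq⟩⟩ =>
    hIn i.1 i.2 (hpq.trans_le (add_le_add hp hq))

theorem deligne_real_section_unique_general
    {A B : Type*}
    [AddCommGroup A] [Module ℂ A] [Module ℝ A] [IsScalarTower ℝ ℂ A]
    [AddCommGroup B] [Module ℂ B] [Module ℝ B] [IsScalarTower ℝ ℂ B]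
    (σA : A →ₗ[ℝ] A) (σB : B →ₗ[ℝ] B)
    (n : ℤ)
    (K : ℤ × ℤ → Submodule ℂ A) (hK : DirectSum.IsInternal K)
    (hKn : ∀ p q : ℤ, n < p + q → K (p, q) = ⊥)
    (hKconj : ∀ p q : ℤ,
      Submodule.map σA ((K (p, q)).restrictScalars ℝ) = (K (q, p)).restrictScalars ℝ)
    (J : ℤ × ℤ → Submodule ℂ B) (hJ : DirectSum.IsInternal J)
    (hJn : ∀ p q : ℤ, p + q ≤ n → J (p, q) = ⊥)
    (hJconj : ∀ p q : ℤ,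
      Submodule.map σB ((J (p, q)).restrictScalars ℝ) = (J (q, p)).restrictScalars ℝ)
    (T : B →ₗ[ℂ] A)
    (hTσ : ∀ b, T (σB b) = σA (T b))
    (hTF : ∀ p : ℤ, ∀ x ∈ (⨆ (k : ℤ) (_ : p ≤ k), ⨆ (l : ℤ), J (k, l)),
      T x ∈ (⨆ (k : ℤ) (_ : p ≤ k), ⨆ (l : ℤ), K (k, l))) :
    T = 0 := by
  simp only [← hodgeFiltration_eq_iSup] at hTF
  refine LinearMap.ker_eq_top.mp (top_unique ?_)
  rw [← hJ.submodule_iSup_eq_top, iSup_le_iff]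
  rintro ⟨p, q⟩ b hb
  rcases le_or_gt (p + q) n with hpq | hpq
  · rw [hJn p q hpq, Submodule.mem_bot] at hb
    simp [hb]
  obtain ⟨b', hb', rfl⟩ : b ∈ Submodule.map σB ((J (q, p)).restrictScalars ℝ) := by
    rwa [hJconj]
  have hF : T (σB b') ∈ hodgeFiltration K p := hTF p _ (mem_hodgeFiltration_of_mem hb)
  have hconjF : T (σB b') ∈ conjHodgeFiltration K q := by
    have := Submodule.mem_map_of_mem (p := (hodgeFiltration K q).restrictScalars ℝ)
      (f := σA) (hTF q _ (mem_hodgeFiltration_of_mem hb'))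
    rwa [map_hodgeFiltration σA hKconj, ← hTσ] at this
  exact Submodule.disjoint_def.mp
    (disjoint_hodgeFiltration_conjHodgeFiltration hK.submodule_iSupIndep hKn hpq) _ hF hconjF

/-- **Uniqueness part of the paper's Proposition 2.4.** If `A` has an ℝ-split
decomposition concentrated in total degrees `≤ n` and `B` has an ℝ-split
decomposition concentrated in total degrees `> n`, then any ℂ-linear map
`T : B → A` that is defined over ℝ (commutes with the conjugations) and
preserves the Hodge filtrations is zero. Hence Deligne's ℝ-linear section of an
extension of ℝ-split mixed Hodge structures is unique. -/
theorem deligne_real_section_unique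
    {A B : Type*}
    [AddCommGroup A] [Module ℂ A] [Module ℝ A] [IsScalarTower ℝ ℂ A]
    [FiniteDimensional ℂ A]
    [AddCommGroup B] [Module ℂ B] [Module ℝ B] [IsScalarTower ℝ ℂ B]
    [FiniteDimensional ℂ B]
    (σA : A →ₗ[ℝ] A) (σB : B →ₗ[ℝ] B)
    (hσAinv : ∀ a, σA (σA a) = a)
    (hσAconj : ∀ (c : ℂ) (a : A), σA (c • a) = (starRingEnd ℂ) c • σA a)
    (hσBinv : ∀ b, σB (σB b) = b)
    (hσBconj : ∀ (c : ℂ) (b : B), σB (c • b) = (starRingEnd ℂ) c • σB b)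
    (n : ℤ)
    (K : ℤ × ℤ → Submodule ℂ A) (hK : DirectSum.IsInternal K)
    (hKn : ∀ p q : ℤ, n < p + q → K (p, q) = ⊥)
    (hKconj : ∀ p q : ℤ,
      Submodule.map σA ((K (p, q)).restrictScalars ℝ) = (K (q, p)).restrictScalars ℝ)
    (J : ℤ × ℤ → Submodule ℂ B) (hJ : DirectSum.IsInternal J)
    (hJn : ∀ p q : ℤ, p + q ≤ n → J (p, q) = ⊥)
    (hJconj : ∀ p q : ℤ,
      Submodule.map σB ((J (p, q)).restrictScalars ℝ) = (J (q, p)).restrictScalars ℝ)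
    (T : B →ₗ[ℂ] A)
    (hTσ : ∀ b, T (σB b) = σA (T b))
    (hTF : ∀ p : ℤ, ∀ x ∈ (⨆ (k : ℤ) (_ : p ≤ k), ⨆ (l : ℤ), J (k, l)),
      T x ∈ (⨆ (k : ℤ) (_ : p ≤ k), ⨆ (l : ℤ), K (k, l))) :
    T = 0 :=
  deligne_real_section_unique_general σA σB n K hK hKn hKconj J hJ hJn hJconj T hTσ hTF
end

section
/- Let A, E, B be finite-dimensional complex vector spaces with conjugations σ_A, σ_E, σ_B. Let f : A → E and g : E → B be ℂ-linear maps with f ∘ σ_A = σ_E ∘ f and g ∘ σ_E = σ_B ∘ g, such that f is injective, g is surjective, and range f = ker g. Fix an integer n, and suppose E = ⊕_{(p,q)} I^{p,q} is an internal direct sum decomposition with σ_E(I^{p,q}) = I^{q,p} for all p,q and with range f = ⊕_{p+q ≤ n} I^{p,q}. Then there exists a ℂ-linear map s : B → E such that g ∘ s = id_B, s ∘ σ_B = σ_E ∘ s, and s(g(I^{p,q})) = I^{p,q} for every (p,q) with p+q > n; in particular s maps F^p B := ⊕_{k ≥ p, l} g(I^{k,l}) into F^p E := ⊕_{k ≥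 p, l} I^{k,l} for every p ∈ ℤ. (This is the existence direction of the paper's Proposition 2.4: if the extension E of ℝ-split mixed Hodge structures is itself ℝ-split, there is an ℝ-linear section whose complexification preserves Hodge filtrations.) -/
/-!
The kernel `range f = ⊕_{p+q ≤ n} I^{p,q}` of `g` has the complement `W = ⊕_{p+q > n} I^{p,q}`,
so `g` restricts to an isomorphism `W ≃ B`, and its inverse `s` is a section of `g` with image `W`
mapping `g(I^{p,q})` back onto `I^{p,q}` for `p + q > n`. Since `σ_E` swaps `I^{p,q}` and `I^{q,p}`,
it preserves `W`; as `s b` is the only preimage of `b` in `W`, both `s (σ_B b)` and `σ_E (s b)`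
are the preimage of `σ_B b` in `W`, so `s` is defined over `ℝ`.
-/

open LinearMap Submodule

theorem DirectSum.IsInternal.isCompl_biSup {R M ι : Type*} [Ring R] [AddCommGroup M]
    [Module R M] [DecidableEq ι] {I : ι → Submodule R M} (hI : DirectSum.IsInternal I)
    (P : ι → Prop) : IsCompl (⨆ (i) (_ : P i), I i) (⨆ (i) (_ : ¬P i), I i) where
  disjoint := hI.submodule_iSupIndep.disjoint_biSup_biSup (s := {i | P i}) (t := {i | ¬P i})
    (Set.disjoint_left.mpr fun _ hi hi' => hi' hi)
  codisjoint := by rw [codisjoint_iff, ← iSup_split, hI.submodule_iSup_eq_top]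

theorem Submodule.map_restrictScalars_biSup_le {S R M ι : Type*} [Semiring S] [Semiring R]
    [AddCommMonoid M] [Module S M] [Module R M] [SMul S R] [IsScalarTower S R M]
    {I : ι → Submodule R M} (σ : M →ₗ[S] M) (τ : ι → ι) (P : ι → Prop)
    (hσ : ∀ i, map σ ((I i).restrictScalars S) ≤ (I (τ i)).restrictScalars S)
    (hP : ∀ i, P i → P (τ i)) :
    map σ ((⨆ (i) (_ : P i), I i).restrictScalars S) ≤ (⨆ (i) (_ : P i), I i).restrictScalars S := by
  simp only [restrictScalars_iSup, map_iSup]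
  exact iSup₂_le fun i hi => (hσ i).trans (le_iSup₂_of_le (τ i) (hP i hi) le_rfl)

namespace LinearMap

variable {R M N : Type*} [Ring R] [AddCommGroup M] [Module R M] [AddCommGroup N] [Module R N]
  {g : M →ₗ[R] N} (hg : Function.Surjective g) {W : Submodule R M} (hW : IsCompl (ker g) W)

noncomputable def sectionOfIsCompl : N →ₗ[R] M :=
  W.subtype ∘ₗ (quotientEquivOfIsCompl _ W hW).toLinearMap ∘ₗ
    (g.quotKerEquivOfSurjective hg).symm.toLinearMap

theorem sectionOfIsCompl_mem (b : N) : sectionOfIsCompl hg hW b ∈ W :=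
  Subtype.property _

theorem apply_sectionOfIsCompl (b : N) : g (sectionOfIsCompl hg hW b) = b := by
  conv_rhs => rw [← (g.quotKerEquivOfSurjective hg).apply_symm_apply b,
    ← mk_quotientEquivOfIsCompl_apply hW ((g.quotKerEquivOfSurjective hg).symm b)]
  rfl

theorem eq_sectionOfIsCompl {x : M} (hx : x ∈ W) {b : N} (hxb : g x = b) :
    x = sectionOfIsCompl hg hW b := by
  have hker : x - sectionOfIsCompl hg hW b ∈ ker g := by
    simp [mem_ker, hxb, apply_sectionOfIsCompl]
  exact sub_eq_zero.mp (disjoint_def.mp hW.disjoint _ hker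
    (sub_mem hx (sectionOfIsCompl_mem hg hW b)))

theorem sectionOfIsCompl_apply_of_mem {x : M} (hx : x ∈ W) : sectionOfIsCompl hg hW (g x) = x :=
  (eq_sectionOfIsCompl hg hW hx rfl).symm

theorem map_sectionOfIsCompl_map_of_le {U : Submodule R M} (hU : U ≤ W) :
    map (sectionOfIsCompl hg hW) (map g U) = U := by
  rw [← map_comp]
  refine SetLike.coe_injective ?_
  rw [map_coe]
  exact Set.EqOn.image_eq_self fun x hx => sectionOfIsCompl_apply_of_mem hg hW (hU hx)

theorem sectionOfIsCompl_comm {σM : M → M} {σN : N → N} (hgσ : ∀ x, g (σM x) = σN (g x))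
    (hσW : ∀ x ∈ W, σM x ∈ W) (b : N) :
    sectionOfIsCompl hg hW (σN b) = σM (sectionOfIsCompl hg hW b) :=
  (eq_sectionOfIsCompl hg hW (hσW _ (sectionOfIsCompl_mem hg hW b))
    (by rw [hgσ, apply_sectionOfIsCompl])).symm

end LinearMap

theorem deligne_real_section_exists_general
    {A E B : Type*}
    [AddCommGroup A] [Module ℂ A]
    [AddCommGroup E] [Module ℂ E] [Module ℝ E] [IsScalarTower ℝ ℂ E]
    [AddCommGroup B] [Module ℂ B] [Module ℝ B]
    (σE : E →ₗ[ℝ] E) (σB : B →ₗ[ℝ] B)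
    (f : A →ₗ[ℂ] E) (g : E →ₗ[ℂ] B)
    (hgσ : ∀ e, g (σE e) = σB (g e))
    (hg : Function.Surjective g)
    (hfg : LinearMap.range f = LinearMap.ker g)
    (n : ℤ)
    (I : ℤ × ℤ → Submodule ℂ E) (hI : DirectSum.IsInternal I)
    (hIconj : ∀ p q : ℤ,
      Submodule.map σE ((I (p, q)).restrictScalars ℝ) = (I (q, p)).restrictScalars ℝ)
    (hrange : LinearMap.range f = ⨆ (pq : ℤ × ℤ) (_ : pq.1 + pq.2 ≤ n), I pq) :
    ∃ s : B →ₗ[ℂ] E,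
      g.comp s = LinearMap.id ∧
      (∀ b, s (σB b) = σE (s b)) ∧
      (∀ p q : ℤ, n < p + q →
        Submodule.map s (Submodule.map g (I (p, q))) = I (p, q)) ∧
      (∀ p : ℤ, ∀ x ∈ (⨆ (k : ℤ) (_ : p ≤ k), ⨆ (l : ℤ), Submodule.map g (I (k, l))),
        s x ∈ (⨆ (k : ℤ) (_ : p ≤ k), ⨆ (l : ℤ), I (k, l))) := by
  set W := ⨆ (pq : ℤ × ℤ) (_ : ¬pq.1 + pq.2 ≤ n), I pq
  have hW : IsCompl (ker g) W := by
    rw [← hfg, hrange]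
    exact hI.isCompl_biSup _
  have hIW {p q : ℤ} (hpq : n < p + q) : I (p, q) ≤ W :=
    le_iSup₂_of_le (p, q) (not_le.mpr hpq) le_rfl
  have hσW : map σE (W.restrictScalars ℝ) ≤ W.restrictScalars ℝ :=
    map_restrictScalars_biSup_le σE Prod.swap _ (fun pq => (hIconj pq.1 pq.2).le)
      fun pq h => by rwa [Prod.fst_swap, Prod.snd_swap, add_comm]
  set s := sectionOfIsCompl hg hW
  have hsI (p q : ℤ) (hpq : n < p + q) : map s (map g (I (p, q))) = I (p, q) :=
    map_sectionOfIsCompl_map_of_le hg hW (hIW hpq)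
  have hsI_le (k l : ℤ) : map s (map g (I (k, l))) ≤ I (k, l) := by
    by_cases hkl : n < k + l
    · exact (hsI k l hkl).le
    · have hker : I (k, l) ≤ ker g := hfg ▸ hrange ▸ le_iSup₂_of_le (k, l) (not_lt.mp hkl) le_rfl
      rw [le_ker_iff_map.mp hker, Submodule.map_bot]
      exact bot_le
  refine ⟨s, LinearMap.ext (apply_sectionOfIsCompl hg hW),
    sectionOfIsCompl_comm hg hW hgσ fun x hx => hσW (mem_map_of_mem hx), hsI, fun p x hx => ?_⟩
  suffices map s (⨆ (k : ℤ) (_ : p ≤ k), ⨆ (l : ℤ), map g (I (k, l))) ≤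
      ⨆ (k : ℤ) (_ : p ≤ k), ⨆ (l : ℤ), I (k, l) from this (mem_map_of_mem hx)
  simp only [Submodule.map_iSup]
  gcongr with k _ l
  exact hsI_le k l

/-- **Existence direction of the paper's Proposition 2.4.** Let
`0 → A →f E →g B → 0` be an exact sequence of finite-dimensional complex vector
spaces with conjugations, with `f`, `g` defined over ℝ. If `E` carries an
ℝ-split decomposition `E = ⊕ I^{p,q}` (i.e. `σ_E(I^{p,q}) = I^{q,p}`) with
`range f = ⊕_{p+q ≤ n} I^{p,q}`, then there is a ℂ-linear section `s` of `g`
defined over ℝ which maps `g(I^{p,q})` onto `I^{p,q}` for `p+q > n`; in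
particular `s` preserves the Hodge filtrations. -/
theorem deligne_real_section_exists
    {A E B : Type*}
    [AddCommGroup A] [Module ℂ A] [Module ℝ A] [IsScalarTower ℝ ℂ A]
    [FiniteDimensional ℂ A]
    [AddCommGroup E] [Module ℂ E] [Module ℝ E] [IsScalarTower ℝ ℂ E]
    [FiniteDimensional ℂ E]
    [AddCommGroup B] [Module ℂ B] [Module ℝ B] [IsScalarTower ℝ ℂ B]
    [FiniteDimensional ℂ B]
    (σA : A →ₗ[ℝ] A) (σE : E →ₗ[ℝ] E) (σB : B →ₗ[ℝ] B)
    (hσAinv : ∀ a, σA (σA a) = a)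
    (hσAconj : ∀ (c : ℂ) (a : A), σA (c • a) = (starRingEnd ℂ) c • σA a)
    (hσEinv : ∀ e, σE (σE e) = e)
    (hσEconj : ∀ (c : ℂ) (e : E), σE (c • e) = (starRingEnd ℂ) c • σE e)
    (hσBinv : ∀ b, σB (σB b) = b)
    (hσBconj : ∀ (c : ℂ) (b : B), σB (c • b) = (starRingEnd ℂ) c • σB b)
    (f : A →ₗ[ℂ] E) (g : E →ₗ[ℂ] B)
    (hfσ : ∀ a, f (σA a) = σE (f a))
    (hgσ : ∀ e, g (σE e) = σB (g e))
    (hf : Function.Injective f) (hg : Function.Surjective g)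
    (hfg : LinearMap.range f = LinearMap.ker g)
    (n : ℤ)
    (I : ℤ × ℤ → Submodule ℂ E) (hI : DirectSum.IsInternal I)
    (hIconj : ∀ p q : ℤ,
      Submodule.map σE ((I (p, q)).restrictScalars ℝ) = (I (q, p)).restrictScalars ℝ)
    (hrange : LinearMap.range f = ⨆ (pq : ℤ × ℤ) (_ : pq.1 + pq.2 ≤ n), I pq) :
    ∃ s : B →ₗ[ℂ] E,
      g.comp s = LinearMap.id ∧
      (∀ b, s (σB b) = σE (s b)) ∧
      (∀ p q : ℤ, n < p + q →
        Submodule.map s (Submodule.map g (I (p, q))) = I (p, q)) ∧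
      (∀ p : ℤ, ∀ x ∈ (⨆ (k : ℤ) (_ : p ≤ k), ⨆ (l : ℤ), Submodule.map g (I (k, l))),
        s x ∈ (⨆ (k : ℤ) (_ : p ≤ k), ⨆ (l : ℤ), I (k, l))) :=
  deligne_real_section_exists_general σE σB f g hgσ hg hfg n I hI hIconj hrange
end

section
/- Let A, E, B be finite-dimensional complex vector spaces with conjugations σ_A, σ_E, σ_B. Let f : A → E and g : E → B be ℂ-linear maps with f ∘ σ_A = σ_E ∘ f and g ∘ σ_E = σ_B ∘ g, such that f is injective, g is surjective, and range f = ker g. Suppose A = ⊕_{(p,q)} K^{p,q} and B = ⊕_{(p,q)} J^{p,q} are internal direct sum decompositions with σ_A(K^{p,q}) = K^{q,p} and σ_B(J^{p,q}) = J^{q,p} for all p,q. Let s : B → E be a ℂ-linear map with g ∘ s = id_B and s ∘ σ_B = σ_E ∘ s. Then the subspaces I^{p,q} := f(K^{p,q}) + s(J^{p,q}) form an internal direct sum decomposition E = ⊕_{(p,q)} I^{p,q} satisfying σ_E(I^{p,q}) = I^{q,p} for all p,q. (This is the converse direction of the paper's Proposition 2.4: an ℝ-linear section whose complexification is compatible with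 the decompositions makes the extension E ℝ-split.) -/
/-!
A section `s` of `g` makes `(a, b) ↦ f a + s b` an isomorphism `A × B ≃ E`, and this isomorphism
carries the product decomposition `K^{p,q} × J^{p,q}` of `A × B` onto the family `I^{p,q}`.
Since `f` and `s` commute with the conjugations, `σ_E` maps `f(K^{p,q})` to `f(K^{q,p})` and
`s(J^{p,q})` to `s(J^{q,p})`.
-/

open Submodule

namespace DirectSum.IsInternal

variable {R M N ι : Type*} [Ring R] [AddCommGroup M] [AddCommGroup N] [Module R M] [Module R N]
  [DecidableEq ι] {K : ι → Submodule R M}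

theorem prod {J : ι → Submodule R N} (hK : IsInternal K) (hJ : IsInternal J) :
    IsInternal fun i ↦ (K i).prod (J i) := by
  rw [isInternal_submodule_iff_iSupIndep_and_iSup_eq_top] at *
  refine ⟨fun i ↦ ?_, ?_⟩
  · have hle : ⨆ j ≠ i, (K j).prod (J j) ≤ (⨆ j ≠ i, K j).prod (⨆ j ≠ i, J j) :=
      iSup₂_le fun j hj ↦ prod_mono (le_iSup₂ (f := fun j _ ↦ K j) j hj)
        (le_iSup₂ (f := fun j _ ↦ J j) j hj)
    refine Disjoint.mono_right hle ?_
    rw [disjoint_iff, prod_inf_prod, (hK.1 i).eq_bot, (hJ.1 i).eq_bot, prod_bot]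
  · rw [eq_top_iff, ← prod_top, ← hK.2, ← hJ.2, prod_le_iff, Submodule.map_iSup,
      Submodule.map_iSup]
    exact ⟨iSup_mono fun i ↦ map_le_iff_le_comap.2 fun x hx ↦ ⟨hx, zero_mem _⟩,
      iSup_mono fun i ↦ map_le_iff_le_comap.2 fun x hx ↦ ⟨zero_mem _, hx⟩⟩

theorem map_linearEquiv (hK : IsInternal K) (e : M ≃ₗ[R] N) :
    IsInternal fun i ↦ (K i).map (e : M →ₗ[R] N) := by
  rw [isInternal_submodule_iff_iSupIndep_and_iSup_eq_top] at *
  exact ⟨hK.1.map_orderIso (orderIsoMapComap e),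
    by rw [← Submodule.map_iSup, hK.2, Submodule.map_top, LinearEquiv.range]⟩

end DirectSum.IsInternal

/-- The inverse of the splitting given by `Function.Exact.splitSurjectiveEquiv` is definitionally
`f ∘ₗ fst + s ∘ₗ snd`, i.e. `f.coprod s`. -/
theorem Function.Exact.bijective_coprod_of_comp_eq_id {R M N P : Type*} [Semiring R]
    [AddCommGroup M] [AddCommGroup N] [AddCommGroup P] [Module R M] [Module R N] [Module R P]
    {f : M →ₗ[R] N} {g : N →ₗ[R] P} (h : Function.Exact f g) (hf : Function.Injective f)
    {s : P →ₗ[R] N} (hs : g ∘ₗ s = .id) : Function.Bijective (f.coprod s) :=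
  (h.splitSurjectiveEquiv hf ⟨s, hs⟩).1.symm.bijective

theorem Submodule.map_restrictScalars_map_of_comp_comm {R S M N : Type*} [Semiring R]
    [Semiring S] [SMul R S] [AddCommMonoid M] [AddCommMonoid N] [Module R M] [Module S M]
    [Module R N] [Module S N] [IsScalarTower R S M] [IsScalarTower R S N]
    {σM : M →ₗ[R] M} {σN : N →ₗ[R] N} {f : M →ₗ[S] N} (hf : ∀ x, f (σM x) = σN (f x))
    {p p' : Submodule S M} (hp : (p.restrictScalars R).map σM = p'.restrictScalars R) :
    ((p.map f).restrictScalars R).map σN = (p'.map f).restrictScalars R := by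
  have hcomm : σN ∘ₗ f.restrictScalars R = f.restrictScalars R ∘ₗ σM :=
    LinearMap.ext fun x ↦ (hf x).symm
  rw [restrictScalars_map, restrictScalars_map, ← map_comp, hcomm, map_comp, hp]

theorem rSplit_of_real_section_general
    {A E B : Type*}
    [AddCommGroup A] [Module ℂ A] [Module ℝ A] [IsScalarTower ℝ ℂ A]
    [AddCommGroup E] [Module ℂ E] [Module ℝ E] [IsScalarTower ℝ ℂ E]
    [AddCommGroup B] [Module ℂ B] [Module ℝ B] [IsScalarTower ℝ ℂ B]
    (σA : A →ₗ[ℝ] A) (σE : E →ₗ[ℝ] E) (σB : B →ₗ[ℝ] B)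
    (f : A →ₗ[ℂ] E) (g : E →ₗ[ℂ] B)
    (hfσ : ∀ a, f (σA a) = σE (f a))
    (hf : Function.Injective f)
    (hfg : LinearMap.range f = LinearMap.ker g)
    (K : ℤ × ℤ → Submodule ℂ A) (hK : DirectSum.IsInternal K)
    (hKconj : ∀ p q : ℤ,
      Submodule.map σA ((K (p, q)).restrictScalars ℝ) = (K (q, p)).restrictScalars ℝ)
    (J : ℤ × ℤ → Submodule ℂ B) (hJ : DirectSum.IsInternal J)
    (hJconj : ∀ p q : ℤ,
      Submodule.map σB ((J (p, q)).restrictScalars ℝ) = (J (q, p)).restrictScalars ℝ)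
    (s : B →ₗ[ℂ] E)
    (hs : g.comp s = LinearMap.id)
    (hsσ : ∀ b, s (σB b) = σE (s b)) :
    DirectSum.IsInternal
      (fun pq : ℤ × ℤ => Submodule.map f (K pq) ⊔ Submodule.map s (J pq)) ∧
    (∀ p q : ℤ,
      Submodule.map σE
        ((Submodule.map f (K (p, q)) ⊔ Submodule.map s (J (p, q))).restrictScalars ℝ)
      = (Submodule.map f (K (q, p)) ⊔ Submodule.map s (J (q, p))).restrictScalars ℝ) := by
  set φ := LinearEquiv.ofBijective (f.coprod s)
    ((LinearMap.exact_iff.2 hfg.symm).bijective_coprod_of_comp_eq_id hf hs)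
  have hI : ∀ pq, ((K pq).prod (J pq)).map (φ : A × B →ₗ[ℂ] E) =
      Submodule.map f (K pq) ⊔ Submodule.map s (J pq) :=
    fun pq ↦ LinearMap.map_coprod_prod f s _ _
  refine ⟨?_, fun p q ↦ ?_⟩
  · simpa only [hI] using (hK.prod hJ).map_linearEquiv φ
  · rw [restrictScalars_sup, restrictScalars_sup, Submodule.map_sup,
      map_restrictScalars_map_of_comp_comm hfσ (hKconj p q),
      map_restrictScalars_map_of_comp_comm hsσ (hJconj p q)]

/-- **Converse direction of the paper's Proposition 2.4.** Let
`0 → A →f E →g B → 0` be an exact sequence of finite-dimensional complex vector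
spaces with conjugations, with `f`, `g` defined over ℝ, and let `A = ⊕ K^{p,q}`
and `B = ⊕ J^{p,q}` be ℝ-split decompositions. If `s : B → E` is a ℂ-linear
section of `g` defined over ℝ, then the subspaces `I^{p,q} = f(K^{p,q}) + s(J^{p,q})`
form an internal direct sum decomposition of `E` with `σ_E(I^{p,q}) = I^{q,p}`,
i.e. the extension `E` is ℝ-split. -/
theorem rSplit_of_real_section
    {A E B : Type*}
    [AddCommGroup A] [Module ℂ A] [Module ℝ A] [IsScalarTower ℝ ℂ A]
    [FiniteDimensional ℂ A]
    [AddCommGroup E] [Module ℂ E] [Module ℝ E] [IsScalarTower ℝ ℂ E]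
    [FiniteDimensional ℂ E]
    [AddCommGroup B] [Module ℂ B] [Module ℝ B] [IsScalarTower ℝ ℂ B]
    [FiniteDimensional ℂ B]
    (σA : A →ₗ[ℝ] A) (σE : E →ₗ[ℝ] E) (σB : B →ₗ[ℝ] B)
    (hσAinv : ∀ a, σA (σA a) = a)
    (hσAconj : ∀ (c : ℂ) (a : A), σA (c • a) = (starRingEnd ℂ) c • σA a)
    (hσEinv : ∀ e, σE (σE e) = e)
    (hσEconj : ∀ (c : ℂ) (e : E), σE (c • e) = (starRingEnd ℂ) c • σE e)
    (hσBinv : ∀ b, σB (σB b) = b)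
    (hσBconj : ∀ (c : ℂ) (b : B), σB (c • b) = (starRingEnd ℂ) c • σB b)
    (f : A →ₗ[ℂ] E) (g : E →ₗ[ℂ] B)
    (hfσ : ∀ a, f (σA a) = σE (f a))
    (hgσ : ∀ e, g (σE e) = σB (g e))
    (hf : Function.Injective f) (hg : Function.Surjective g)
    (hfg : LinearMap.range f = LinearMap.ker g)
    (K : ℤ × ℤ → Submodule ℂ A) (hK : DirectSum.IsInternal K)
    (hKconj : ∀ p q : ℤ,
      Submodule.map σA ((K (p, q)).restrictScalars ℝ) = (K (q, p)).restrictScalars ℝ)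
    (J : ℤ × ℤ → Submodule ℂ B) (hJ : DirectSum.IsInternal J)
    (hJconj : ∀ p q : ℤ,
      Submodule.map σB ((J (p, q)).restrictScalars ℝ) = (J (q, p)).restrictScalars ℝ)
    (s : B →ₗ[ℂ] E)
    (hs : g.comp s = LinearMap.id)
    (hsσ : ∀ b, s (σB b) = σE (s b)) :
    DirectSum.IsInternal
      (fun pq : ℤ × ℤ => Submodule.map f (K pq) ⊔ Submodule.map s (J pq)) ∧
    (∀ p q : ℤ,
      Submodule.map σE
        ((Submodule.map f (K (p, q)) ⊔ Submodule.map s (J (p, q))).restrictScalars ℝ)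
      = (Submodule.map f (K (q, p)) ⊔ Submodule.map s (J (q, p))).restrictScalars ℝ) :=
  rSplit_of_real_section_general σA σE σB f g hfσ hf hfg K hK hKconj J hJ hJconj s hs hsσ
end

section
/- Let 0 → V →^f E →^g W → 0 be a short exact sequence of finitely generated free ℤ-modules (f injective, g surjective, range f = ker g); write V_ℝ = V ⊗ ℝ, etc., and f_ℝ, g_ℝ for the induced ℝ-linear maps. Let s_ℝ : W_ℝ → E_ℝ be an ℝ-linear map with g_ℝ ∘ s_ℝ = id. Let t : Hom_ℝ(V_ℝ, ℝ) → Hom_ℝ(E_ℝ, ℝ) be an ℝ-linear map such that for all β: t(β) ∘ f_ℝ = −β and t(β) ∘ s_ℝ = 0. Let s_ℤ, s'_ℤ : Hom(V, ℤ) → Hom(E, ℤ) be ℤ-linear maps with s_ℤ(α) ∘ f = −α and s'_ℤ(α) ∘ f = −α for all α. Then for every ω ∈ W_ℝ and every α ∈ Hom(V, ℤ): the ℝ-linear functional s'_ℤ(α)_ℝ − t(α_ℝ) on E_ℝ vanishes on f_ℝ(V_ℝ), hence equals μ ∘ g_ℝ for a unique μ ∈ Hom_ℝ(W_ℝ, ℝ),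 and the real number s_ℤ(α)_ℝ(s_ℝ(ω)) − μ(ω) belongs to the subgroup {λ_ℝ(ω) : λ ∈ Hom(W, ℤ)} of ℝ. (This is the paper's Proposition 5.3, the pairing identity ⟨s_ℝ(ω), s_ℤ^∨(α)⟩_E = ⟨ω, s'^∨_ℤ(α) − s_ℝ^∨(α)⟩_W modulo periods, which reduces the main theorem to linear algebra.) -/
/-!
Tensoring with `ℝ` is right exact, so a functional on `E_ℝ` killing `f_ℝ(V_ℝ)` factors uniquely
through the surjection `g_ℝ`; the same holds over `ℤ` for `s_ℤ(α) - s'_ℤ(α)`, which kills `f`,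
giving `λ` with `s_ℤ(α) - s'_ℤ(α) = λ ∘ g`. Since `t(α_ℝ)` vanishes on the image of `s_ℝ`,
`μ(ω) = s'_ℤ(α)_ℝ(s_ℝ ω)`, hence `s_ℤ(α)_ℝ(s_ℝ ω) - μ(ω) = λ_ℝ(g_ℝ(s_ℝ ω)) = λ_ℝ(ω)`.
-/

open TensorProduct

/-- The ℝ-linear extension `α_ℝ : M ⊗ ℝ → ℝ` of an integral functional
`α : M → ℤ` on a ℤ-module `M`. -/
noncomputable def extendScalarsℝ {M : Type*} [AddCommGroup M] (α : M →ₗ[ℤ] ℤ) :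
    (ℝ ⊗[ℤ] M) →ₗ[ℝ] ℝ :=
  LinearMap.liftBaseChange ℝ ((Int.castAddHom ℝ).toIntLinearMap.comp α)

namespace Function.Exact

theorem existsUnique_comp_eq {R M N P Q : Type*} [Ring R] [AddCommGroup M] [AddCommGroup N]
    [AddCommGroup P] [AddCommGroup Q] [Module R M] [Module R N] [Module R P] [Module R Q]
    {f : M →ₗ[R] N} {g : N →ₗ[R] P} (h : Exact f g) (hg : Surjective g) {φ : N →ₗ[R] Q}
    (hφ : φ ∘ₗ f = 0) : ∃! ψ : P →ₗ[R] Q, ψ ∘ₗ g = φ := by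
  set ψ := (LinearMap.range f).liftQ φ (by rintro _ ⟨m, rfl⟩; exact LinearMap.congr_fun hφ m) ∘ₗ
    (h.linearEquivOfSurjective hg).symm.toLinearMap
  have hψ : ψ ∘ₗ g = φ := by
    ext n
    simp [ψ]
  exact ⟨ψ, hψ, fun ψ' hψ' => (LinearMap.cancel_right hg).mp (hψ'.trans hψ.symm)⟩

theorem baseChange {R M N P : Type*} [CommRing R] [AddCommGroup M] [AddCommGroup N]
    [AddCommGroup P] [Module R M] [Module R N] [Module R P] {f : M →ₗ[R] N} {g : N →ₗ[R] P}
    (A : Type*) [Ring A] [Algebra R A] (h : Exact f g) (hg : Surjective g) :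
    Exact (f.baseChange A) (g.baseChange A) :=
  lTensor_exact A h hg

end Function.Exact

theorem extendScalarsℝ_neg {M : Type*} [AddCommGroup M] (α : M →ₗ[ℤ] ℤ) :
    extendScalarsℝ (-α) = -extendScalarsℝ α := by
  ext m; simp [extendScalarsℝ]

theorem extendScalarsℝ_sub {M : Type*} [AddCommGroup M] (α β : M →ₗ[ℤ] ℤ) :
    extendScalarsℝ (α - β) = extendScalarsℝ α - extendScalarsℝ β := by
  ext m; simp [extendScalarsℝ]

theorem extendScalarsℝ_comp {M N : Type*} [AddCommGroup M] [AddCommGroup N]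
    (β : N →ₗ[ℤ] ℤ) (f : M →ₗ[ℤ] N) :
    extendScalarsℝ (β ∘ₗ f) = extendScalarsℝ β ∘ₗ f.baseChange ℝ := by
  ext m; simp [extendScalarsℝ]

theorem pairing_identity_general
    {V E W : Type*}
    [AddCommGroup V]
    [AddCommGroup E]
    [AddCommGroup W]
    (f : V →ₗ[ℤ] E) (g : E →ₗ[ℤ] W)
    (hg : Function.Surjective g)
    (hfg : LinearMap.range f = LinearMap.ker g)
    (sR : (ℝ ⊗[ℤ] W) →ₗ[ℝ] (ℝ ⊗[ℤ] E))
    (hsR : (g.baseChange ℝ).comp sR = LinearMap.id)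
    (t : ((ℝ ⊗[ℤ] V) →ₗ[ℝ] ℝ) →ₗ[ℝ] ((ℝ ⊗[ℤ] E) →ₗ[ℝ] ℝ))
    (htf : ∀ β : (ℝ ⊗[ℤ] V) →ₗ[ℝ] ℝ, (t β).comp (f.baseChange ℝ) = -β)
    (hts : ∀ β : (ℝ ⊗[ℤ] V) →ₗ[ℝ] ℝ, (t β).comp sR = 0)
    (sZ sZ' : (V →ₗ[ℤ] ℤ) →ₗ[ℤ] (E →ₗ[ℤ] ℤ))
    (hsZ : ∀ α : V →ₗ[ℤ] ℤ, (sZ α).comp f = -α)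
    (hsZ' : ∀ α : V →ₗ[ℤ] ℤ, (sZ' α).comp f = -α)
    (ω : ℝ ⊗[ℤ] W) (α : V →ₗ[ℤ] ℤ) :
    (∀ v : ℝ ⊗[ℤ] V,
      (extendScalarsℝ (sZ' α) - t (extendScalarsℝ α)) (f.baseChange ℝ v) = 0) ∧
    (∃! μ : (ℝ ⊗[ℤ] W) →ₗ[ℝ] ℝ,
      extendScalarsℝ (sZ' α) - t (extendScalarsℝ α) = μ.comp (g.baseChange ℝ)) ∧
    (∀ μ : (ℝ ⊗[ℤ] W) →ₗ[ℝ] ℝ,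
      extendScalarsℝ (sZ' α) - t (extendScalarsℝ α) = μ.comp (g.baseChange ℝ) →
      ∃ lam : W →ₗ[ℤ] ℤ,
        extendScalarsℝ (sZ α) (sR ω) - μ ω = extendScalarsℝ lam ω) := by
  set φ := extendScalarsℝ (sZ' α) - t (extendScalarsℝ α)
  have hsR' : ∀ w, g.baseChange ℝ (sR w) = w := LinearMap.congr_fun hsR
  have hexact : Function.Exact f g := LinearMap.exact_iff.mpr hfg.symm
  have hφf : φ ∘ₗ f.baseChange ℝ = 0 := by
    rw [LinearMap.sub_comp, ← extendScalarsℝ_comp, hsZ', htf, extendScalarsℝ_neg, sub_self]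
  refine ⟨LinearMap.congr_fun hφf, ?_, fun μ hμ => ?_⟩
  · simpa only [eq_comm] using (hexact.baseChange ℝ hg).existsUnique_comp_eq
      (LinearMap.baseChange_surjective ℝ hg) hφf
  have hμω : μ ω = extendScalarsℝ (sZ' α) (sR ω) := by
    calc μ ω = μ (g.baseChange ℝ (sR ω)) := by rw [hsR']
      _ = φ (sR ω) := by rw [hμ]; rfl
      _ = extendScalarsℝ (sZ' α) (sR ω) := by
        simpa [φ] using LinearMap.congr_fun (hts (extendScalarsℝ α)) ω
  obtain ⟨lam, hlam⟩ := (hexact.existsUnique_comp_eq hg (φ := sZ α - sZ' α)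
    (by rw [LinearMap.sub_comp, hsZ, hsZ', sub_self])).exists
  refine ⟨lam, ?_⟩
  rw [hμω, ← LinearMap.sub_apply, ← extendScalarsℝ_sub, ← hlam, extendScalarsℝ_comp,
    LinearMap.comp_apply, hsR']

/-- **The paper's Proposition 5.3.** Let `0 → V →f E →g W → 0` be a short exact
sequence of finitely generated free ℤ-modules, `s_ℝ` an ℝ-linear section of
`g_ℝ`, `t` the ℝ-linear section of the dual sequence annihilating the image of
`s_ℝ` (the role of Deligne's ℝ-linear section: `t(β) ∘ f_ℝ = −β`,
`t(β) ∘ s_ℝ = 0`), and `s_ℤ, s'_ℤ` ℤ-linear sections of the dual sequence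
(`s_ℤ(α) ∘ f = −α`). Then for every `ω ∈ W_ℝ` and `α ∈ Hom(V,ℤ)`, the
functional `s'_ℤ(α)_ℝ − t(α_ℝ)` vanishes on `f_ℝ(V_ℝ)`, hence equals `μ ∘ g_ℝ`
for a unique `μ`, and `s_ℤ(α)_ℝ(s_ℝ(ω)) − μ(ω)` is a period, i.e. lies in
`{λ_ℝ(ω) : λ ∈ Hom(W,ℤ)}`. -/
theorem pairing_identity
    {V E W : Type*}
    [AddCommGroup V] [Module.Free ℤ V] [Module.Finite ℤ V]
    [AddCommGroup E] [Module.Free ℤ E] [Module.Finite ℤ E]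
    [AddCommGroup W] [Module.Free ℤ W] [Module.Finite ℤ W]
    (f : V →ₗ[ℤ] E) (g : E →ₗ[ℤ] W)
    (hf : Function.Injective f) (hg : Function.Surjective g)
    (hfg : LinearMap.range f = LinearMap.ker g)
    (sR : (ℝ ⊗[ℤ] W) →ₗ[ℝ] (ℝ ⊗[ℤ] E))
    (hsR : (g.baseChange ℝ).comp sR = LinearMap.id)
    (t : ((ℝ ⊗[ℤ] V) →ₗ[ℝ] ℝ) →ₗ[ℝ] ((ℝ ⊗[ℤ] E) →ₗ[ℝ] ℝ))
    (htf : ∀ β : (ℝ ⊗[ℤ] V) →ₗ[ℝ] ℝ, (t β).comp (f.baseChange ℝ) = -β)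
    (hts : ∀ β : (ℝ ⊗[ℤ] V) →ₗ[ℝ] ℝ, (t β).comp sR = 0)
    (sZ sZ' : (V →ₗ[ℤ] ℤ) →ₗ[ℤ] (E →ₗ[ℤ] ℤ))
    (hsZ : ∀ α : V →ₗ[ℤ] ℤ, (sZ α).comp f = -α)
    (hsZ' : ∀ α : V →ₗ[ℤ] ℤ, (sZ' α).comp f = -α)
    (ω : ℝ ⊗[ℤ] W) (α : V →ₗ[ℤ] ℤ) :
    (∀ v : ℝ ⊗[ℤ] V,
      (extendScalarsℝ (sZ' α) - t (extendScalarsℝ α)) (f.baseChange ℝ v) = 0) ∧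
    (∃! μ : (ℝ ⊗[ℤ] W) →ₗ[ℝ] ℝ,
      extendScalarsℝ (sZ' α) - t (extendScalarsℝ α) = μ.comp (g.baseChange ℝ)) ∧
    (∀ μ : (ℝ ⊗[ℤ] W) →ₗ[ℝ] ℝ,
      extendScalarsℝ (sZ' α) - t (extendScalarsℝ α) = μ.comp (g.baseChange ℝ) →
      ∃ lam : W →ₗ[ℤ] ℤ,
        extendScalarsℝ (sZ α) (sR ω) - μ ω = extendScalarsℝ lam ω) :=
  pairing_identity_general f g hg hfg sR hsR t htf hts sZ sZ' hsZ hsZ' ω α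
end

section
/- Let 0 → A →^f E →^g B → 0 and 0 → B' →^p E' →^q A' → 0 be short exact sequences of finitely generated free ℤ-modules. Let ⟨,⟩_E : E × E' → ℤ, ⟨,⟩_A : A × A' → ℤ, and ⟨,⟩_B : B × B' → ℤ be ℤ-bilinear pairings satisfying the compatibilities ⟨f(a), e'⟩_E = −⟨a, q(e')⟩_A for all a ∈ A, e' ∈ E', and ⟨e, p(b')⟩_E = ⟨g(e), b'⟩_B for all e ∈ E, b' ∈ B'. If ⟨,⟩_A and ⟨,⟩_B are unimodular (the induced maps A → Hom(A', ℤ) and B → Hom(B', ℤ) are isomorphisms), then ⟨,⟩_E is unimodular (the induced map E → Hom(E', ℤ) is an isomorphism). (This is the principle underlying the paper's Proposition 2.9(i): unimodularity of the pairing between two long exact sequences is preserved when passing to kernels and cokernels.) -/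
/-!
Dualising `0 → B' → E' → A' → 0` gives a left exact row `0 → A'^* → E'^* → B'^*`, and the
pairings become a map from the row `A → E → B → 0` to it, with `-⟨,⟩_A` on the left.
Since the outer vertical maps are bijective, a diagram chase as in the four lemmas shows that
`⟨,⟩_E` is injective and surjective.
-/

open Function

namespace LinearMap

section FourLemmas

variable {R : Type*} [Ring R] {M₁ M₂ M₃ N₁ N₂ N₃ : Type*}
  [AddCommGroup M₁] [AddCommGroup M₂] [AddCommGroup M₃]
  [AddCommGroup N₁] [AddCommGroup N₂] [AddCommGroup N₃]
  [Module R M₁] [Module R M₂] [Module R M₃] [Module R N₁] [Module R N₂] [Module R N₃]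
  {f₁ : M₁ →ₗ[R] M₂} {f₂ : M₂ →ₗ[R] M₃} {g₁ : N₁ →ₗ[R] N₂} {g₂ : N₂ →ₗ[R] N₃}
  {i₁ : M₁ →ₗ[R] N₁} {i₂ : M₂ →ₗ[R] N₂} {i₃ : M₃ →ₗ[R] N₃}

theorem injective_of_injective_of_injective_of_exact
    (hc₁ : g₁ ∘ₗ i₁ = i₂ ∘ₗ f₁) (hc₂ : g₂ ∘ₗ i₂ = i₃ ∘ₗ f₂)
    (hf : Exact f₁ f₂) (hg₁ : Injective g₁) (hi₁ : Injective i₁) (hi₃ : Injective i₃) :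
    Injective i₂ := by
  refine (injective_iff_map_eq_zero i₂).mpr fun m hm ↦ ?_
  have hf₂m : f₂ m = 0 := hi₃ <| by
    rw [map_zero, ← comp_apply, ← hc₂, comp_apply, hm, map_zero]
  obtain ⟨a, rfl⟩ := (hf m).mp hf₂m
  have hi₁a : i₁ a = 0 := hg₁ <| by
    rw [map_zero, ← comp_apply, hc₁, comp_apply, hm]
  rw [(injective_iff_map_eq_zero i₁).mp hi₁ a hi₁a, map_zero]

theorem surjective_of_surjective_of_surjective_of_exact
    (hc₁ : g₁ ∘ₗ i₁ = i₂ ∘ₗ f₁) (hc₂ : g₂ ∘ₗ i₂ = i₃ ∘ₗ f₂)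
    (hg : Exact g₁ g₂) (hf₂ : Surjective f₂) (hi₁ : Surjective i₁) (hi₃ : Surjective i₃) :
    Surjective i₂ := by
  intro n
  obtain ⟨m, hm⟩ : ∃ m, g₂ (i₂ m) = g₂ n := by
    obtain ⟨c, hc⟩ := hi₃ (g₂ n)
    obtain ⟨m, rfl⟩ := hf₂ c
    exact ⟨m, by rw [← comp_apply, hc₂, comp_apply, hc]⟩
  obtain ⟨x, hx⟩ := (hg (n - i₂ m)).mp (by rw [map_sub, hm, sub_self])
  obtain ⟨a, rfl⟩ := hi₁ x
  refine ⟨f₁ a + m, ?_⟩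
  rw [map_add, ← comp_apply, ← hc₁, comp_apply, hx, sub_add_cancel]

end FourLemmas

theorem exact_dualMap_of_exact_of_surjective {R M₁ M₂ M₃ : Type*} [CommRing R]
    [AddCommGroup M₁] [AddCommGroup M₂] [AddCommGroup M₃]
    [Module R M₁] [Module R M₂] [Module R M₃] {p : M₁ →ₗ[R] M₂} {q : M₂ →ₗ[R] M₃}
    (hpq : Exact p q) (hq : Surjective q) :
    Exact q.dualMap p.dualMap := by
  rw [exact_iff, ker_dualMap_eq_dualAnnihilator_range,
    range_dualMap_eq_dualAnnihilator_ker_of_surjective q hq, hpq.linearMap_ker_eq]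

end LinearMap

theorem unimodular_of_extension_general
    {A E B B' E' A' : Type*}
    [AddCommGroup A]
    [AddCommGroup E]
    [AddCommGroup B]
    [AddCommGroup B']
    [AddCommGroup E']
    [AddCommGroup A']
    (f : A →ₗ[ℤ] E) (g : E →ₗ[ℤ] B)
    (hg : Function.Surjective g)
    (hfg : LinearMap.range f = LinearMap.ker g)
    (p : B' →ₗ[ℤ] E') (q : E' →ₗ[ℤ] A')
    (hq : Function.Surjective q)
    (hpq : LinearMap.range p = LinearMap.ker q)
    (bE : E →ₗ[ℤ] E' →ₗ[ℤ] ℤ)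
    (bA : A →ₗ[ℤ] A' →ₗ[ℤ] ℤ)
    (bB : B →ₗ[ℤ] B' →ₗ[ℤ] ℤ)
    (hcompat₁ : ∀ (a : A) (e' : E'), bE (f a) e' = - bA a (q e'))
    (hcompat₂ : ∀ (e : E) (b' : B'), bE e (p b') = bB (g e) b')
    (hbA : Function.Bijective bA)
    (hbB : Function.Bijective bB) :
    Function.Bijective bE := by
  have hc₁ : q.dualMap ∘ₗ (-bA) = bE ∘ₗ f := by
    ext a e'
    simp [hcompat₁]
  have hc₂ : p.dualMap ∘ₗ bE = bB ∘ₗ g := by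
    ext e b'
    simp [hcompat₂]
  have hnegA : Function.Bijective (-bA) := neg_involutive.bijective.comp hbA
  have hrow : Function.Exact f g := LinearMap.exact_iff.mpr hfg.symm
  have hdualRow : Function.Exact q.dualMap p.dualMap :=
    LinearMap.exact_dualMap_of_exact_of_surjective (LinearMap.exact_iff.mpr hpq.symm) hq
  exact ⟨LinearMap.injective_of_injective_of_injective_of_exact hc₁ hc₂ hrow
      (LinearMap.dualMap_injective_of_surjective hq) hnegA.1 hbB.1,
    LinearMap.surjective_of_surjective_of_surjective_of_exact hc₁ hc₂ hdualRow hg hnegA.2 hbB.2⟩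

/-- **Principle behind the paper's Proposition 2.9(i).** Given short exact
sequences `0 → A →f E →g B → 0` and `0 → B' →p E' →q A' → 0` of finitely
generated free ℤ-modules and compatible bilinear pairings
(`⟨f(a), e'⟩_E = −⟨a, q(e')⟩_A` and `⟨e, p(b')⟩_E = ⟨g(e), b'⟩_B`), if the
pairings on `A × A'` and `B × B'` are unimodular then so is the pairing on
`E × E'`. -/
theorem unimodular_of_extension
    {A E B B' E' A' : Type*}
    [AddCommGroup A] [Module.Free ℤ A] [Module.Finite ℤ A]
    [AddCommGroup E] [Module.Free ℤ E] [Module.Finite ℤ E]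
    [AddCommGroup B] [Module.Free ℤ B] [Module.Finite ℤ B]
    [AddCommGroup B'] [Module.Free ℤ B'] [Module.Finite ℤ B']
    [AddCommGroup E'] [Module.Free ℤ E'] [Module.Finite ℤ E']
    [AddCommGroup A'] [Module.Free ℤ A'] [Module.Finite ℤ A']
    (f : A →ₗ[ℤ] E) (g : E →ₗ[ℤ] B)
    (hf : Function.Injective f) (hg : Function.Surjective g)
    (hfg : LinearMap.range f = LinearMap.ker g)
    (p : B' →ₗ[ℤ] E') (q : E' →ₗ[ℤ] A')
    (hp : Function.Injective p) (hq : Function.Surjective q)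
    (hpq : LinearMap.range p = LinearMap.ker q)
    (bE : E →ₗ[ℤ] E' →ₗ[ℤ] ℤ)
    (bA : A →ₗ[ℤ] A' →ₗ[ℤ] ℤ)
    (bB : B →ₗ[ℤ] B' →ₗ[ℤ] ℤ)
    (hcompat₁ : ∀ (a : A) (e' : E'), bE (f a) e' = - bA a (q e'))
    (hcompat₂ : ∀ (e : E) (b' : B'), bE e (p b') = bB (g e) b')
    (hbA : Function.Bijective bA)
    (hbB : Function.Bijective bB) :
    Function.Bijective bE :=
  unimodular_of_extension_general f g hg hfg p q hq hpq bE bA bB hcompat₁ hcompat₂ hbA hbB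
end
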